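/- arXiv:2001.11408 — 7 statements merged into one kernel-verified Lean document; each statement's English description precedes it below -/
import Mathlib

section
/- Let d ≥ 2, let x₁, …, x_d be d points in a pseudometric space (X, dist), and let δ > 0. Then there exists a partition Π of the index set {1, …, d} such that: (i) whenever i and j belong to the same block of Π, dist(x_i, x_j) ≤ δ; and (ii) whenever i and j belong to different blocks of Π, dist(x_i, x_j) > δ/(d−1). -/
/-!
Join two indices when their points are at distance at most `ε = δ / (d - 1)` and take the
connected components of this graph as the blocks. Points in different components are more than
`ε` apart, while points in one component are joined by a path of at most `d - 1` edges, so the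
triangle inequality puts them within `(d - 1) ε = δ` of each other.
-/

section DistLEGraph

open SimpleGraph

variable {ι X : Type*} [PseudoMetricSpace X]

def distLEGraph (x : ι → X) (ε : ℝ) : SimpleGraph ι where
  Adj i j := i ≠ j ∧ dist (x i) (x j) ≤ ε
  symm := ⟨fun _ _ h => ⟨h.1.symm, dist_comm (x _) (x _) ▸ h.2⟩⟩
  loopless := ⟨fun _ h => h.1 rfl⟩

variable {x : ι → X} {ε : ℝ}

theorem distLEGraph_adj {i j : ι} :
    (distLEGraph x ε).Adj i j ↔ i ≠ j ∧ dist (x i) (x j) ≤ ε :=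
  Iff.rfl

theorem dist_le_length_mul_of_walk_distLEGraph {i j : ι} (p : (distLEGraph x ε).Walk i j) :
    dist (x i) (x j) ≤ p.length * ε := by
  induction p with
  | nil => simp
  | @cons i k j hik _ ih =>
    calc dist (x i) (x j) ≤ dist (x i) (x k) + dist (x k) (x j) := dist_triangle _ _ _
      _ ≤ ε + _ * ε := add_le_add (distLEGraph_adj.1 hik).2 ih
      _ = _ := by rw [Walk.length_cons, Nat.cast_succ]; ring

theorem dist_le_of_reachable_distLEGraph [Fintype ι] (hε : 0 ≤ ε) {i j : ι}
    (h : (distLEGraph x ε).Reachable i j) :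
    dist (x i) (x j) ≤ (Fintype.card ι - 1 : ℕ) * ε := by
  obtain ⟨p, hp⟩ := h.exists_isPath
  have hlen : p.length ≤ Fintype.card ι - 1 := Nat.le_sub_one_of_lt hp.length_lt
  calc dist (x i) (x j) ≤ p.length * ε := dist_le_length_mul_of_walk_distLEGraph p
    _ ≤ _ := by gcongr

theorem lt_dist_of_not_reachable_distLEGraph {i j : ι} (h : ¬(distLEGraph x ε).Reachable i j) :
    ε < dist (x i) (x j) := by
  by_contra! hle
  obtain rfl | hij := eq_or_ne i j
  · exact h (Reachable.refl i)
  · exact h (Adj.reachable (distLEGraph_adj.2 ⟨hij, hle⟩))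

end DistLEGraph

/-- Lemma (partition of points in a pseudometric space). -/
theorem empirical_tail_copulas_stmt2
    {X : Type*} [PseudoMetricSpace X] (d : ℕ) (hd : 2 ≤ d)
    (x : Fin d → X) (δ : ℝ) (hδ : 0 < δ) :
    ∃ rel : Fin d → Fin d → Prop, Equivalence rel ∧
      ∀ i j : Fin d,
        (rel i j → dist (x i) (x j) ≤ δ) ∧
        (¬ rel i j → dist (x i) (x j) > δ / ((d : ℝ) - 1)) := by
  have hcast : ((d - 1 : ℕ) : ℝ) = (d : ℝ) - 1 := by
    rw [Nat.cast_sub (one_le_two.trans hd), Nat.cast_one]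
  have hpos : (0 : ℝ) < (d : ℝ) - 1 := by
    rw [← hcast]; exact_mod_cast Nat.sub_pos_of_lt hd
  set G := distLEGraph x (δ / ((d : ℝ) - 1))
  refine ⟨G.Reachable, G.reachable_is_equivalence, fun i j => ⟨fun h => ?_,
    lt_dist_of_not_reachable_distLEGraph⟩⟩
  calc dist (x i) (x j) ≤ (d - 1 : ℕ) * (δ / ((d : ℝ) - 1)) := by
        simpa using dist_le_of_reachable_distLEGraph (div_pos hδ hpos).le h
    _ = δ := by rw [hcast, mul_div_cancel₀ _ hpos.ne']
end

section
/- Let (Ω, 𝓕, P) be a probability space, T a nonempty set, and U : T → Ω → ℝ a family of random variables such that for every t ∈ T the random variable U(t) is uniformly distributed on the interval (0,1). Assume that for all s, t ∈ T and all x, y ∈ [0,∞) the bivariate tail-copula limit R_{(s,t)}(x,y) = lim_{u↓0} u⁻¹ P[U(s) ≤ u·x, U(t) ≤ u·y] exists. Define ρ₂((s,x),(t,y)) = (x − 2·R_{(s,t)}(x,y) + y)^{1/2}. Then for all s, t ∈ T and x, y ∈ [0,∞): [ρ₂((s,x),(t,y))]² = |x − y| + 2·( min(x,y) − R_{(s,t)}(x,y)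 ) ≤ |x − y| + 2·min(x,y)·(1 − R_{(s,t)}(1,1)). -/
/-!
Let `R = R_{(s,t)}`. The probability of an intersection is at most that of either event, so with
uniform marginals `0 ≤ R(x, y) ≤ min(x, y)`; this makes the radicand nonnegative, and the identity
is then the case split `x ≤ y` / `y ≤ x`. Enlarging the events shows that `R` is monotone, and the
substitution `u ↦ c u` in the limit shows that it is positively homogeneous, so
`min(x, y) · R(1, 1) = R(min(x, y), min(x, y)) ≤ R(x, y)`.
-/

open MeasureTheory Filter Set Topology

namespace TailCopula

variable {Ω : Type*} [MeasurableSpace Ω] {P : Measure Ω} {X Y : Ω → ℝ}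

/-- The ratio `u⁻¹ P[X ≤ u x, Y ≤ u y]` whose limit as `u ↓ 0` is the tail copula at `(x, y)`. -/
noncomputable def tailRatio (P : Measure Ω) (X Y : Ω → ℝ) (x y u : ℝ) : ℝ :=
  (P {ω | X ω ≤ u * x ∧ Y ω ≤ u * y}).toReal / u

lemma tailRatio_comm (x y : ℝ) : tailRatio P X Y x y = tailRatio P Y X y x := by
  ext u
  simp only [tailRatio, and_comm]

lemma tailRatio_nonneg {x y u : ℝ} (hu : 0 ≤ u) : 0 ≤ tailRatio P X Y x y u :=
  div_nonneg ENNReal.toReal_nonneg hu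

lemma tailRatio_mono [IsFiniteMeasure P] {x y x' y' u : ℝ} (hu : 0 ≤ u) (hx : x ≤ x')
    (hy : y ≤ y') : tailRatio P X Y x y u ≤ tailRatio P X Y x' y' u := by
  have hsub : {ω | X ω ≤ u * x ∧ Y ω ≤ u * y} ⊆ {ω | X ω ≤ u * x' ∧ Y ω ≤ u * y'} :=
    fun ω hω => ⟨hω.1.trans (by gcongr), hω.2.trans (by gcongr)⟩
  exact div_le_div_of_nonneg_right (measureReal_mono hsub) hu

lemma tailRatio_le_left [IsFiniteMeasure P]
    (hX : ∀ z ∈ Icc (0 : ℝ) 1, P {ω | X ω ≤ z} = ENNReal.ofReal z) {x y u : ℝ} (hx : 0 ≤ x)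
    (hu : 0 < u) (hux : u * x ≤ 1) : tailRatio P X Y x y u ≤ x := by
  have hmarg : P.real {ω | X ω ≤ u * x} = u * x := by
    rw [measureReal_def, hX _ ⟨by positivity, hux⟩, ENNReal.toReal_ofReal (by positivity)]
  rw [tailRatio, div_le_iff₀ hu, mul_comm x u]
  exact (measureReal_mono fun ω hω => hω.1).trans_eq hmarg

variable {x y r : ℝ}

lemma nonneg_of_tendsto_tailRatio (h : Tendsto (tailRatio P X Y x y) (𝓝[>] 0) (𝓝 r)) :
    0 ≤ r :=
  ge_of_tendsto h <| eventually_nhdsWithin_of_forall fun _ hu => tailRatio_nonneg (le_of_lt hu)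

lemma le_left_of_tendsto_tailRatio [IsFiniteMeasure P]
    (hX : ∀ z ∈ Icc (0 : ℝ) 1, P {ω | X ω ≤ z} = ENNReal.ofReal z) (hx : 0 ≤ x)
    (h : Tendsto (tailRatio P X Y x y) (𝓝[>] 0) (𝓝 r)) : r ≤ x := by
  refine le_of_tendsto h ?_
  have hsmall : ∀ᶠ u in 𝓝[>] (0 : ℝ), u * x ≤ 1 :=
    nhdsWithin_le_nhds <| (continuous_mul_const x).tendsto' 0 0 (zero_mul x) |>.eventually_le_const
      zero_lt_one
  filter_upwards [self_mem_nhdsWithin, hsmall] with u hu hux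
  exact tailRatio_le_left hX hx hu hux

lemma le_right_of_tendsto_tailRatio [IsFiniteMeasure P]
    (hY : ∀ z ∈ Icc (0 : ℝ) 1, P {ω | Y ω ≤ z} = ENNReal.ofReal z) (hy : 0 ≤ y)
    (h : Tendsto (tailRatio P X Y x y) (𝓝[>] 0) (𝓝 r)) : r ≤ y :=
  le_left_of_tendsto_tailRatio hY hy (tailRatio_comm (P := P) x y ▸ h)

lemma tendsto_tailRatio_mul (h : Tendsto (tailRatio P X Y x y) (𝓝[>] 0) (𝓝 r)) {c : ℝ}
    (hc : 0 < c) : Tendsto (tailRatio P X Y (c * x) (c * y)) (𝓝[>] 0) (𝓝 (c * r)) := by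
  have hscale : Tendsto (c * ·) (𝓝[>] (0 : ℝ)) (𝓝[>] 0) :=
    tendsto_iff_comap.2 (comap_mulLeft_nhdsGT_zero hc).ge
  refine ((h.comp hscale).const_mul c).congr' ?_
  filter_upwards [self_mem_nhdsWithin] with u (hu : 0 < u)
  simp only [Function.comp, tailRatio, mul_assoc, mul_left_comm u c]
  field_simp

end TailCopula

open TailCopula in
theorem empirical_tail_copulas_stmt4_general
    {Ω : Type*} [MeasurableSpace Ω] (P : Measure Ω) [IsProbabilityMeasure P]
    {T : Type*} (U : T → Ω → ℝ)
    (hunif : ∀ t : T, ∀ x ∈ Icc (0:ℝ) 1, P {ω | U t ω ≤ x} = ENNReal.ofReal x)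
    (R : T → T → ℝ → ℝ → ℝ)
    (hR : ∀ (s t : T) (x y : ℝ), 0 ≤ x → 0 ≤ y →
      Tendsto (fun u : ℝ => (P {ω | U s ω ≤ u * x ∧ U t ω ≤ u * y}).toReal / u)
        (𝓝[>] (0:ℝ)) (𝓝 (R s t x y)))
    (s t : T) (x y : ℝ) (hx : 0 ≤ x) (hy : 0 ≤ y) :
    Real.sqrt (x - 2 * R s t x y + y) ^ 2
        = |x - y| + 2 * (min x y - R s t x y) ∧
      |x - y| + 2 * (min x y - R s t x y)
        ≤ |x - y| + 2 * min x y * (1 - R s t 1 1) := by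
  have hxy : Tendsto (tailRatio P (U s) (U t) x y) (𝓝[>] 0) (𝓝 (R s t x y)) := hR s t x y hx hy
  have hRle : R s t x y ≤ min x y :=
    le_min (le_left_of_tendsto_tailRatio (hunif s) hx hxy)
      (le_right_of_tendsto_tailRatio (hunif t) hy hxy)
  have hkey : min x y * R s t 1 1 ≤ R s t x y := by
    rcases (le_min hx hy).eq_or_lt with hm | hm
    · rw [← hm, zero_mul]
      exact nonneg_of_tendsto_tailRatio hxy
    · have hdiag := tendsto_tailRatio_mul (hR s t 1 1 zero_le_one zero_le_one) hm
      rw [mul_one] at hdiag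
      exact le_of_tendsto_of_tendsto hdiag hxy <| eventually_nhdsWithin_of_forall fun _ hu =>
        tailRatio_mono (le_of_lt hu) (min_le_left x y) (min_le_right x y)
  refine ⟨?_, by nlinarith⟩
  rw [Real.sq_sqrt (by linarith [min_le_left x y, min_le_right x y])]
  rcases le_total x y with h | h
  · rw [abs_of_nonpos (by linarith), min_eq_left h]; ring
  · rw [abs_of_nonneg (by linarith), min_eq_right h]; ring

/-- Lemma (expression and bound for the squared standard deviation semimetric). -/
theorem empirical_tail_copulas_stmt4
    {Ω : Type*} [MeasurableSpace Ω] (P : Measure Ω) [IsProbabilityMeasure P]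
    {T : Type*} [Nonempty T] (U : T → Ω → ℝ)
    (hunif : ∀ t : T, ∀ x ∈ Icc (0:ℝ) 1, P {ω | U t ω ≤ x} = ENNReal.ofReal x)
    (R : T → T → ℝ → ℝ → ℝ)
    (hR : ∀ (s t : T) (x y : ℝ), 0 ≤ x → 0 ≤ y →
      Tendsto (fun u : ℝ => (P {ω | U s ω ≤ u * x ∧ U t ω ≤ u * y}).toReal / u)
        (𝓝[>] (0:ℝ)) (𝓝 (R s t x y)))
    (s t : T) (x y : ℝ) (hx : 0 ≤ x) (hy : 0 ≤ y) :
    Real.sqrt (x - 2 * R s t x y + y) ^ 2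
        = |x - y| + 2 * (min x y - R s t x y) ∧
      |x - y| + 2 * (min x y - R s t x y)
        ≤ |x - y| + 2 * min x y * (1 - R s t 1 1) :=
  empirical_tail_copulas_stmt4_general P U hunif R hR s t x y hx hy
end

section
/- Let (Ω, 𝓕, P) be a probability space, T a nonempty set, and U : T → Ω → ℝ a family of random variables such that for every t ∈ T the random variable U(t) is uniformly distributed on the interval (0,1). Assume that for all s, t ∈ T and all x, y ∈ [0,∞) the bivariate tail-copula limit R_{(s,t)}(x,y) = lim_{u↓0} u⁻¹ P[U(s) ≤ u·x, U(t) ≤ u·y] exists, and define ρ₂((s,x),(t,y)) = (x − 2·R_{(s,t)}(x,y) + y)^{1/2}. Then for any sequence (s_n, x_n) in T × [0,∞) and any point (s, x) ∈ T × [0,∞): ρ₂((s_n,x_n),(s,x)) → 0 as n → ∞ if and only if [x_n → x and x·(R_{(s_n,s)}(1,1) − 1) → 0]. -/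
open MeasureTheory Filter Set Topology

/-! The tail copula `r` of a pair with uniform marginals satisfies `0 ≤ r x y ≤ min x y`, is
monotone, and is positively homogeneous, so `r x x = x * r 1 1`. Sandwiching `r a x` between
`min a x * r 1 1` and `max a x * r 1 1` shows that `ρ₂² = a - 2 r a x + x` is bounded below by
both `|a - x|` and `x (1 - r 1 1)`, and above by `|a - x| + 2 x (1 - r 1 1)`. -/

lemma tendsto_zero_iff_of_abs_le_of_le_add {ι : Type*} {l : Filter ι} {f g h : ι → ℝ} {C : ℝ}
    (hg : ∀ i, |g i| ≤ f i) (hh : ∀ i, |h i| ≤ f i) (hf : ∀ i, f i ≤ |g i| + C * |h i|) :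
    Tendsto f l (𝓝 0) ↔ Tendsto g l (𝓝 0) ∧ Tendsto h l (𝓝 0) := by
  refine ⟨fun hf0 => ⟨?_, ?_⟩, fun ⟨hg0, hh0⟩ => ?_⟩
  · exact squeeze_zero_norm hg hf0
  · exact squeeze_zero_norm hh hf0
  · have hbound : Tendsto (fun i => |g i| + C * |h i|) l (𝓝 0) := by
      simpa using hg0.abs.add (hh0.abs.const_mul C)
    exact squeeze_zero (fun i => (abs_nonneg _).trans (hg i)) hf hbound

lemma Real.tendsto_sqrt_zero_iff {ι : Type*} {l : Filter ι} {f : ι → ℝ} (hf : ∀ i, 0 ≤ f i) :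
    Tendsto (fun i => √(f i)) l (𝓝 0) ↔ Tendsto f l (𝓝 0) := by
  refine ⟨fun h => ?_, fun h => by simpa using h.sqrt⟩
  simpa [Real.sq_sqrt (hf _)] using h.pow 2

lemma stdDevSq_bounds_of_le {a x r c : ℝ} (hx : 0 ≤ x) (hra : r ≤ a) (hrx : r ≤ x)
    (hlow : min a x * c ≤ r) (hhigh : r ≤ max a x * c) (hc : c ≤ 1) :
    |a - x| ≤ a - 2 * r + x ∧ |x * (c - 1)| ≤ a - 2 * r + x ∧
      a - 2 * r + x ≤ |a - x| + 2 * |x * (c - 1)| := by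
  rw [abs_of_nonpos (mul_nonpos_of_nonneg_of_nonpos hx (by linarith))]
  rcases le_total a x with hax | hxa
  · rw [min_eq_left hax] at hlow
    rw [max_eq_right hax] at hhigh
    rw [abs_of_nonpos (by linarith)]
    exact ⟨by linarith, by linarith,
      by nlinarith [mul_nonneg (sub_nonneg.2 hax) (sub_nonneg.2 hc)]⟩
  · rw [min_eq_right hxa] at hlow
    rw [max_eq_left hxa] at hhigh
    rw [abs_of_nonneg (by linarith)]
    exact ⟨by linarith, by nlinarith [mul_nonneg (sub_nonneg.2 hxa) (sub_nonneg.2 hc)],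
      by linarith⟩

noncomputable def tailRatio {Ω : Type*} [MeasurableSpace Ω] (P : Measure Ω) (X Y : Ω → ℝ)
    (x y u : ℝ) : ℝ :=
  (P {ω | X ω ≤ u * x ∧ Y ω ≤ u * y}).toReal / u

namespace tailRatio

variable {Ω : Type*} [MeasurableSpace Ω] {P : Measure Ω} {X Y : Ω → ℝ} {x y a b : ℝ}

lemma comm (P : Measure Ω) (X Y : Ω → ℝ) (x y : ℝ) :
    tailRatio P X Y x y = tailRatio P Y X y x := by
  ext u
  simp only [tailRatio, and_comm]

lemma nonneg_of_tendsto (h : Tendsto (tailRatio P X Y x y) (𝓝[>] 0) (𝓝 a)) : 0 ≤ a := by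
  refine ge_of_tendsto h ?_
  filter_upwards [self_mem_nhdsWithin] with u (hu : 0 < u)
  exact div_nonneg ENNReal.toReal_nonneg hu.le

lemma le_of_tendsto_of_le [IsFiniteMeasure P] {x' y' : ℝ}
    (h : Tendsto (tailRatio P X Y x y) (𝓝[>] 0) (𝓝 a))
    (h' : Tendsto (tailRatio P X Y x' y') (𝓝[>] 0) (𝓝 b))
    (hx : x ≤ x') (hy : y ≤ y') : a ≤ b := by
  refine le_of_tendsto_of_tendsto h h' ?_
  filter_upwards [self_mem_nhdsWithin] with u (hu : 0 < u)
  unfold tailRatio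
  gcongr
  exact measure_ne_top P _

lemma le_left_of_tendsto (hX : ∀ v ∈ Icc (0 : ℝ) 1, P {ω | X ω ≤ v} = ENNReal.ofReal v)
    (hx : 0 ≤ x) (h : Tendsto (tailRatio P X Y x y) (𝓝[>] 0) (𝓝 a)) : a ≤ x := by
  refine le_of_tendsto h ?_
  have hsmall : ∀ᶠ u in 𝓝[>] (0 : ℝ), u * x ≤ 1 := by
    have : Tendsto (fun u : ℝ => u * x) (𝓝 0) (𝓝 0) := by
      simpa using (continuous_mul_const x).tendsto 0
    exact (this.eventually (eventually_le_nhds one_pos)).filter_mono nhdsWithin_le_nhds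
  filter_upwards [self_mem_nhdsWithin, hsmall] with u (hu : 0 < u) hux
  have hmarg : P {ω | X ω ≤ u * x} = ENNReal.ofReal (u * x) := hX _ ⟨by positivity, hux⟩
  have hle : (P {ω | X ω ≤ u * x ∧ Y ω ≤ u * y}).toReal ≤ u * x := by
    calc (P {ω | X ω ≤ u * x ∧ Y ω ≤ u * y}).toReal ≤ (P {ω | X ω ≤ u * x}).toReal :=
          ENNReal.toReal_mono (by simp [hmarg]) (measure_mono fun ω hω => hω.1)
      _ = u * x := by rw [hmarg, ENNReal.toReal_ofReal (by positivity)]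
  calc tailRatio P X Y x y u ≤ u * x / u := by unfold tailRatio; gcongr
    _ = x := by field_simp

lemma le_right_of_tendsto (hY : ∀ v ∈ Icc (0 : ℝ) 1, P {ω | Y ω ≤ v} = ENNReal.ofReal v)
    (hy : 0 ≤ y) (h : Tendsto (tailRatio P X Y x y) (𝓝[>] 0) (𝓝 a)) : a ≤ y :=
  le_left_of_tendsto hY hy (comm P X Y x y ▸ h)

lemma tendsto_mul_of_tendsto {c : ℝ} (hc : 0 < c)
    (h : Tendsto (tailRatio P X Y x y) (𝓝[>] 0) (𝓝 a)) :
    Tendsto (tailRatio P X Y (c * x) (c * y)) (𝓝[>] 0) (𝓝 (c * a)) := by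
  have hscale : Tendsto (fun u : ℝ => u * c) (𝓝[>] 0) (𝓝[>] 0) := by
    refine tendsto_nhdsWithin_of_tendsto_nhds_of_eventually_within _ ?_ ?_
    · simpa using ((continuous_mul_const c).tendsto 0).mono_left nhdsWithin_le_nhds
    · filter_upwards [self_mem_nhdsWithin] with u (hu : 0 < u)
      exact mul_pos hu hc
  refine ((h.comp hscale).const_mul c).congr' ?_
  filter_upwards [self_mem_nhdsWithin] with u (hu : 0 < u)
  simp only [Function.comp, tailRatio, mul_assoc]
  field_simp

end tailRatio

def IsTailCopula {Ω : Type*} [MeasurableSpace Ω] (P : Measure Ω) (X Y : Ω → ℝ)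
    (r : ℝ → ℝ → ℝ) : Prop :=
  ∀ x y, 0 ≤ x → 0 ≤ y → Tendsto (tailRatio P X Y x y) (𝓝[>] 0) (𝓝 (r x y))

namespace IsTailCopula

variable {Ω : Type*} [MeasurableSpace Ω] {P : Measure Ω} {X Y : Ω → ℝ} {r : ℝ → ℝ → ℝ}
  {x y : ℝ}

lemma diag_eq (hr : IsTailCopula P X Y r)
    (hX : ∀ v ∈ Icc (0 : ℝ) 1, P {ω | X ω ≤ v} = ENNReal.ofReal v)
    (hx : 0 ≤ x) : r x x = x * r 1 1 := by
  rcases hx.eq_or_lt with rfl | hx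
  · rw [zero_mul]
    exact le_antisymm (tailRatio.le_left_of_tendsto hX le_rfl (hr 0 0 le_rfl le_rfl))
      (tailRatio.nonneg_of_tendsto (hr 0 0 le_rfl le_rfl))
  · refine tendsto_nhds_unique (hr x x hx.le hx.le) ?_
    simpa using tailRatio.tendsto_mul_of_tendsto hx (hr 1 1 zero_le_one zero_le_one)

lemma stdDevSq_bounds [IsFiniteMeasure P] (hr : IsTailCopula P X Y r)
    (hX : ∀ v ∈ Icc (0 : ℝ) 1, P {ω | X ω ≤ v} = ENNReal.ofReal v)
    (hY : ∀ v ∈ Icc (0 : ℝ) 1, P {ω | Y ω ≤ v} = ENNReal.ofReal v) (hx : 0 ≤ x) (hy : 0 ≤ y) :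
    |x - y| ≤ x - 2 * r x y + y ∧ |y * (r 1 1 - 1)| ≤ x - 2 * r x y + y ∧
      x - 2 * r x y + y ≤ |x - y| + 2 * |y * (r 1 1 - 1)| := by
  have hxy := hr x y hx hy
  have hmin : 0 ≤ min x y := le_min hx hy
  have hmax : 0 ≤ max x y := hmin.trans min_le_max
  refine stdDevSq_bounds_of_le hy (tailRatio.le_left_of_tendsto hX hx hxy)
    (tailRatio.le_right_of_tendsto hY hy hxy) ?_ ?_
    (tailRatio.le_left_of_tendsto hX zero_le_one (hr 1 1 zero_le_one zero_le_one))
  · rw [← hr.diag_eq hX hmin]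
    exact tailRatio.le_of_tendsto_of_le (hr _ _ hmin hmin) hxy (min_le_left x y)
      (min_le_right x y)
  · rw [← hr.diag_eq hX hmax]
    exact tailRatio.le_of_tendsto_of_le hxy (hr _ _ hmax hmax) (le_max_left x y)
      (le_max_right x y)

end IsTailCopula

theorem empirical_tail_copulas_stmt5_general
    {Ω : Type*} [MeasurableSpace Ω] (P : Measure Ω) [IsProbabilityMeasure P]
    {T : Type*} (U : T → Ω → ℝ)
    (hunif : ∀ t : T, ∀ x ∈ Icc (0:ℝ) 1, P {ω | U t ω ≤ x} = ENNReal.ofReal x)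
    (R : T → T → ℝ → ℝ → ℝ)
    (hR : ∀ (s t : T) (x y : ℝ), 0 ≤ x → 0 ≤ y →
      Tendsto (fun u : ℝ => (P {ω | U s ω ≤ u * x ∧ U t ω ≤ u * y}).toReal / u)
        (𝓝[>] (0:ℝ)) (𝓝 (R s t x y)))
    (sn : ℕ → T) (xn : ℕ → ℝ) (hxn : ∀ n, 0 ≤ xn n)
    (s : T) (x : ℝ) (hx : 0 ≤ x) :
    Tendsto (fun n => Real.sqrt (xn n - 2 * R (sn n) s (xn n) x + x)) atTop (𝓝 0)
      ↔ (Tendsto xn atTop (𝓝 x) ∧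
          Tendsto (fun n => x * (R (sn n) s 1 1 - 1)) atTop (𝓝 0)) := by
  have hcopula : ∀ t, IsTailCopula P (U t) (U s) (R t s) := fun t => hR t s
  have hbounds n := (hcopula (sn n)).stdDevSq_bounds (hunif _) (hunif s) (hxn n) hx
  rw [Real.tendsto_sqrt_zero_iff fun n => (abs_nonneg _).trans (hbounds n).1,
    tendsto_zero_iff_of_abs_le_of_le_add (fun n => (hbounds n).1) (fun n => (hbounds n).2.1)
      (fun n => (hbounds n).2.2), tendsto_sub_nhds_zero_iff]

/-- Lemma (characterization of convergence in the standard deviation semimetric). -/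
theorem empirical_tail_copulas_stmt5
    {Ω : Type*} [MeasurableSpace Ω] (P : Measure Ω) [IsProbabilityMeasure P]
    {T : Type*} [Nonempty T] (U : T → Ω → ℝ)
    (hunif : ∀ t : T, ∀ x ∈ Icc (0:ℝ) 1, P {ω | U t ω ≤ x} = ENNReal.ofReal x)
    (R : T → T → ℝ → ℝ → ℝ)
    (hR : ∀ (s t : T) (x y : ℝ), 0 ≤ x → 0 ≤ y →
      Tendsto (fun u : ℝ => (P {ω | U s ω ≤ u * x ∧ U t ω ≤ u * y}).toReal / u)
        (𝓝[>] (0:ℝ)) (𝓝 (R s t x y)))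
    (sn : ℕ → T) (xn : ℕ → ℝ) (hxn : ∀ n, 0 ≤ xn n)
    (s : T) (x : ℝ) (hx : 0 ≤ x) :
    Tendsto (fun n => Real.sqrt (xn n - 2 * R (sn n) s (xn n) x + x)) atTop (𝓝 0)
      ↔ (Tendsto xn atTop (𝓝 x) ∧
          Tendsto (fun n => x * (R (sn n) s 1 1 - 1)) atTop (𝓝 0)) :=
  empirical_tail_copulas_stmt5_general P U hunif R hR sn xn hxn s x hx
end

section
/- Let (Ω, 𝓕, P) be a probability space, T a nonempty set, and U : T → Ω → ℝ a family of random variables such that for every t ∈ T the random variable U(t) is uniformly distributed on the interval (0,1). Assume that for all s, t ∈ T and all x, y ∈ [0,∞) the bivariate tail-copula limit R_{(s,t)}(x,y) = lim_{u↓0} u⁻¹ P[U(s) ≤ u·x, U(t) ≤ u·y] exists, and define ρ₂((s,x),(t,y)) = (x − 2·R_{(s,t)}(x,y) + y)^{1/2} and ρ_{2,T}(s,t) = ρ₂((s,1),(t,1)) = (2 − 2·R_{(s,t)}(1,1))^{1/2}. Suppose the space (T, ρ_{2,T}) is complete, i.e., for every sequence (s_n) in T with lim_{n→∞} inf_{k,l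 ≥ n} R_{(s_k,s_l)}(1,1) = 1 there exists s ∈ T with R_{(s_n,s)}(1,1) → 1. Then (T × [0,∞), ρ₂) is complete: every sequence (s_n, x_n) in T × [0,∞) with ρ₂((s_k,x_k),(s_l,x_l)) → 0 as k, l → ∞ admits a point (s, x) ∈ T × [0,∞) with ρ₂((s_n,x_n),(s,x)) → 0 as n → ∞. -/
open MeasureTheory Filter Set Topology

section TailRatio

variable {Ω : Type*} [MeasurableSpace Ω] {P : Measure Ω} {X Y : Ω → ℝ}

theorem tailRatio_nonneg {x y u : ℝ} (hu : 0 ≤ u) : 0 ≤ tailRatio P X Y x y u := by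
  unfold tailRatio; positivity

theorem tailRatio_comm (x y u : ℝ) : tailRatio P X Y x y u = tailRatio P Y X y x u := by
  simp only [tailRatio, and_comm]

theorem tailRatio_le_left (hX : ∀ x ∈ Icc (0:ℝ) 1, P {ω | X ω ≤ x} = ENNReal.ofReal x)
    {x y u : ℝ} (hx : 0 ≤ x) (hu : 0 < u) (hux : u * x ≤ 1) : tailRatio P X Y x y u ≤ x := by
  have hsub : P {ω | X ω ≤ u * x ∧ Y ω ≤ u * y} ≤ ENNReal.ofReal (u * x) :=
    hX (u * x) ⟨by positivity, hux⟩ ▸ measure_mono fun ω h => h.1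
  rw [tailRatio, div_le_iff₀ hu, mul_comm x]
  exact ENNReal.toReal_le_of_le_ofReal (by positivity) hsub

theorem tailRatio_mono [IsFiniteMeasure P] {x y x' y' u : ℝ} (hu : 0 < u) (hxx : x ≤ x')
    (hyy : y ≤ y') : tailRatio P X Y x y u ≤ tailRatio P X Y x' y' u := by
  refine div_le_div_of_nonneg_right (ENNReal.toReal_mono (measure_ne_top P _) ?_) hu.le
  exact measure_mono fun ω h =>
    ⟨h.1.trans (mul_le_mul_of_nonneg_left hxx hu.le),
      h.2.trans (mul_le_mul_of_nonneg_left hyy hu.le)⟩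

theorem tailRatio_mul_mul {c : ℝ} (hc : c ≠ 0) (x y : ℝ) :
    tailRatio P X Y (c * x) (c * y) = fun u => c * tailRatio P X Y x y (c * u) := by
  ext u
  simp only [tailRatio, mul_left_comm u c]
  field_simp

end TailRatio

structure IsTailCopulaLike (r : ℝ → ℝ → ℝ) : Prop where
  nonneg : ∀ ⦃x y⦄, 0 ≤ x → 0 ≤ y → 0 ≤ r x y
  le_left : ∀ ⦃x y⦄, 0 ≤ x → 0 ≤ y → r x y ≤ x
  le_right : ∀ ⦃x y⦄, 0 ≤ x → 0 ≤ y → r x y ≤ y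
  mono : ∀ ⦃x y x' y'⦄, 0 ≤ x → 0 ≤ y → x ≤ x' → y ≤ y' → r x y ≤ r x' y'
  mul_mul : ∀ ⦃c x y⦄, 0 < c → 0 ≤ x → 0 ≤ y → r (c * x) (c * y) = c * r x y

theorem eventually_mul_le_one_nhdsGT (x : ℝ) : ∀ᶠ u in 𝓝[>] (0:ℝ), u * x ≤ 1 := by
  have h : Tendsto (fun u : ℝ => u * x) (𝓝 0) (𝓝 0) := by
    simpa using (continuous_mul_const x).tendsto 0
  exact (h.eventually (eventually_le_nhds one_pos)).filter_mono nhdsWithin_le_nhds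

theorem isTailCopulaLike_of_tendsto {Ω : Type*} [MeasurableSpace Ω] {P : Measure Ω}
    [IsFiniteMeasure P] {X Y : Ω → ℝ}
    (hX : ∀ x ∈ Icc (0:ℝ) 1, P {ω | X ω ≤ x} = ENNReal.ofReal x)
    (hY : ∀ y ∈ Icc (0:ℝ) 1, P {ω | Y ω ≤ y} = ENNReal.ofReal y) {r : ℝ → ℝ → ℝ}
    (hr : ∀ x y, 0 ≤ x → 0 ≤ y → Tendsto (tailRatio P X Y x y) (𝓝[>] 0) (𝓝 (r x y))) :
    IsTailCopulaLike r where
  nonneg x y hx hy := ge_of_tendsto (hr x y hx hy) <| by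
    filter_upwards [self_mem_nhdsWithin] with u hu using tailRatio_nonneg (le_of_lt hu)
  le_left x y hx hy := le_of_tendsto (hr x y hx hy) <| by
    filter_upwards [self_mem_nhdsWithin, eventually_mul_le_one_nhdsGT x] with u hu hux
      using tailRatio_le_left hX hx hu hux
  le_right x y hx hy := le_of_tendsto (hr x y hx hy) <| by
    filter_upwards [self_mem_nhdsWithin, eventually_mul_le_one_nhdsGT y] with u hu huy
    rw [tailRatio_comm]
    exact tailRatio_le_left hY hy hu huy
  mono x y x' y' hx hy hxx hyy :=
    le_of_tendsto_of_tendsto (hr x y hx hy) (hr x' y' (hx.trans hxx) (hy.trans hyy)) <| by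
      filter_upwards [self_mem_nhdsWithin] with u hu using tailRatio_mono hu hxx hyy
  mul_mul c x y hc hx hy := by
    refine tendsto_nhds_unique (hr _ _ (by positivity) (by positivity)) ?_
    rw [tailRatio_mul_mul hc.ne']
    have hmul : Tendsto (c * ·) (𝓝[>] 0) (𝓝[>] 0) := by
      simpa only [comap_mulLeft_nhdsGT_zero hc] using tendsto_comap (f := (c * ·)) (x := 𝓝[>] 0)
    exact ((hr x y hx hy).comp hmul).const_mul c

namespace IsTailCopulaLike

variable {r : ℝ → ℝ → ℝ} {x y c : ℝ}

theorem abs_sub_le (hr : IsTailCopulaLike r) (hx : 0 ≤ x) (hy : 0 ≤ y) :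
    |x - y| ≤ x - 2 * r x y + y := by
  have := hr.le_left hx hy
  have := hr.le_right hx hy
  rw [abs_sub_le_iff]
  constructor <;> linarith

theorem self_eq_mul (hr : IsTailCopulaLike r) (hc : 0 < c) : r c c = c * r 1 1 := by
  simpa using hr.mul_mul hc zero_le_one zero_le_one

theorem mul_le (hr : IsTailCopulaLike r) (hc : 0 < c) (hcx : c ≤ x) (hcy : c ≤ y) :
    c * r 1 1 ≤ r x y :=
  hr.self_eq_mul hc ▸ hr.mono hc.le hc.le hcx hcy

theorem le_mul (hr : IsTailCopulaLike r) (hc : 0 < c) (hx : 0 ≤ x) (hy : 0 ≤ y) (hxc : x ≤ c)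
    (hyc : y ≤ c) :
    r x y ≤ c * r 1 1 :=
  hr.self_eq_mul hc ▸ hr.mono hx hy hxc hyc

end IsTailCopulaLike

theorem tendsto_sInf_tail {f : ℕ → ℕ → ℝ} {a : ℝ}
    (h : Tendsto (fun p : ℕ × ℕ => f p.1 p.2) (atTop ×ˢ atTop) (𝓝 a)) :
    Tendsto (fun n => sInf {r | ∃ k ≥ n, ∃ l ≥ n, r = f k l}) atTop (𝓝 a) := by
  rw [prod_atTop_atTop_eq] at h
  have hlow : ∀ b < a, ∀ᶠ n in atTop, ∀ r ∈ {r | ∃ k ≥ n, ∃ l ≥ n, r = f k l}, b ≤ r := by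
    intro b hb
    obtain ⟨N, hN⟩ := eventually_atTop_prod_self'.1 (h.eventually (eventually_gt_nhds hb))
    refine eventually_atTop.2 ⟨N, ?_⟩
    rintro n hn _ ⟨k, hk, l, hl, rfl⟩
    exact (hN k (hn.trans hk) l (hn.trans hl)).le
  have hdiag : Tendsto (fun n => f n n) atTop (𝓝 a) := h.comp tendsto_atTop_diagonal
  have hmem : ∀ n, f n n ∈ {r | ∃ k ≥ n, ∃ l ≥ n, r = f k l} := fun n =>
    ⟨n, le_rfl, n, le_rfl, rfl⟩
  refine tendsto_order.2 ⟨fun b hb => ?_, fun b hb => ?_⟩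
  · obtain ⟨b', hbb', hb'a⟩ := exists_between hb
    filter_upwards [hlow b' hb'a] with n hn
    exact hbb'.trans_le (le_csInf ⟨_, hmem n⟩ hn)
  · obtain ⟨c, hc⟩ := exists_lt a
    filter_upwards [hlow c hc, hdiag.eventually (eventually_lt_nhds hb)] with n hn hnb
    exact (csInf_le ⟨c, hn⟩ (hmem n)).trans_lt hnb

section Sequences

variable {T : Type*} {R : T → T → ℝ → ℝ → ℝ} {sn : ℕ → T} {xn : ℕ → ℝ}

theorem cauchySeq_of_tendsto_sub_two_mul_add (hR : ∀ s t, IsTailCopulaLike (R s t))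
    (hxn : ∀ n, 0 ≤ xn n)
    (hE : Tendsto (fun p : ℕ × ℕ => xn p.1 - 2 * R (sn p.1) (sn p.2) (xn p.1) (xn p.2) + xn p.2)
      (atTop ×ˢ atTop) (𝓝 0)) :
    CauchySeq xn := by
  rw [cauchySeq_iff_tendsto_dist_atTop_0, ← prod_atTop_atTop_eq]
  exact squeeze_zero (fun _ => dist_nonneg) (fun p => (hR _ _).abs_sub_le (hxn _) (hxn _)) hE

theorem tendsto_one_one_of_tendsto_sub_two_mul_add (hR : ∀ s t, IsTailCopulaLike (R s t))
    (hxn : ∀ n, 0 ≤ xn n) {x : ℝ} (hx : Tendsto xn atTop (𝓝 x)) (hx0 : 0 < x)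
    (hE : Tendsto (fun p : ℕ × ℕ => xn p.1 - 2 * R (sn p.1) (sn p.2) (xn p.1) (xn p.2) + xn p.2)
      (atTop ×ˢ atTop) (𝓝 0)) :
    Tendsto (fun p : ℕ × ℕ => R (sn p.1) (sn p.2) 1 1) (atTop ×ˢ atTop) (𝓝 1) := by
  have hx₁ : Tendsto (fun p : ℕ × ℕ => xn p.1) (atTop ×ˢ atTop) (𝓝 x) := hx.comp tendsto_fst
  have hx₂ : Tendsto (fun p : ℕ × ℕ => xn p.2) (atTop ×ˢ atTop) (𝓝 x) := hx.comp tendsto_snd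
  set M := fun p : ℕ × ℕ => max (xn p.1) (xn p.2)
  have hM : Tendsto M (atTop ×ˢ atTop) (𝓝 x) := by simpa using hx₁.max hx₂
  have hMpos : ∀ᶠ p in atTop ×ˢ atTop, 0 < M p := hM.eventually (eventually_gt_nhds hx0)
  have hRx : Tendsto (fun p : ℕ × ℕ => R (sn p.1) (sn p.2) (xn p.1) (xn p.2))
      (atTop ×ˢ atTop) (𝓝 x) := by
    have h := ((hx₁.add hx₂).sub hE).div_const 2
    rw [show (x + x - 0) / 2 = x by ring] at h
    exact h.congr fun p => by ring
  have hMR : Tendsto (fun p => M p * R (sn p.1) (sn p.2) 1 1) (atTop ×ˢ atTop) (𝓝 x) := by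
    refine tendsto_of_tendsto_of_tendsto_of_le_of_le' hRx hM ?_ ?_
    · filter_upwards [hMpos] with p hp
      exact (hR _ _).le_mul hp (hxn _) (hxn _) (le_max_left _ _) (le_max_right _ _)
    · filter_upwards [hMpos] with p hp
      exact mul_le_of_le_one_right hp.le ((hR _ _).le_left zero_le_one zero_le_one)
  have := hMR.div hM hx0.ne'
  rw [div_self hx0.ne'] at this
  refine this.congr' ?_
  filter_upwards [hMpos] with p hp
  exact mul_div_cancel_left₀ _ hp.ne'

theorem tendsto_of_tendsto_one_one_right (hR : ∀ s t, IsTailCopulaLike (R s t))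
    (hxn : ∀ n, 0 ≤ xn n) {x : ℝ} (hx : Tendsto xn atTop (𝓝 x)) (hx0 : 0 < x) {t : T}
    (ht : Tendsto (fun n => R (sn n) t 1 1) atTop (𝓝 1)) :
    Tendsto (fun n => R (sn n) t (xn n) x) atTop (𝓝 x) := by
  have hmin : Tendsto (fun n => min (xn n) x) atTop (𝓝 x) := by
    simpa using hx.min (tendsto_const_nhds (x := x))
  refine tendsto_of_tendsto_of_tendsto_of_le_of_le' (by simpa using hmin.mul ht) hmin ?_ ?_
  · filter_upwards [hmin.eventually (eventually_gt_nhds hx0)] with n hn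
    exact (hR _ _).mul_le hn (min_le_left _ _) (min_le_right _ _)
  · exact Eventually.of_forall fun n =>
      le_min ((hR _ _).le_left (hxn n) hx0.le) ((hR _ _).le_right (hxn n) hx0.le)

end Sequences

/-- Lemma (completeness of `T × [0,∞)` under the standard deviation semimetric,
given completeness of `T` under the induced semimetric). -/
theorem empirical_tail_copulas_stmt9
    {Ω : Type*} [MeasurableSpace Ω] (P : Measure Ω) [IsProbabilityMeasure P]
    {T : Type*} [Nonempty T] (U : T → Ω → ℝ)
    (hunif : ∀ t : T, ∀ x ∈ Icc (0:ℝ) 1, P {ω | U t ω ≤ x} = ENNReal.ofReal x)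
    (R : T → T → ℝ → ℝ → ℝ)
    (hR : ∀ (s t : T) (x y : ℝ), 0 ≤ x → 0 ≤ y →
      Tendsto (fun u : ℝ => (P {ω | U s ω ≤ u * x ∧ U t ω ≤ u * y}).toReal / u)
        (𝓝[>] (0:ℝ)) (𝓝 (R s t x y)))
    (hcomplete : ∀ s : ℕ → T,
      Tendsto (fun n => sInf {r : ℝ | ∃ k ≥ n, ∃ l ≥ n, r = R (s k) (s l) 1 1})
          atTop (𝓝 1) →
        ∃ t : T, Tendsto (fun n => R (s n) t 1 1) atTop (𝓝 1))
    (sn : ℕ → T) (xn : ℕ → ℝ) (hxn : ∀ n, 0 ≤ xn n)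
    (hcauchy : Tendsto
      (fun p : ℕ × ℕ =>
        Real.sqrt (xn p.1 - 2 * R (sn p.1) (sn p.2) (xn p.1) (xn p.2) + xn p.2))
      (atTop ×ˢ atTop) (𝓝 0)) :
    ∃ s : T, ∃ x : ℝ, 0 ≤ x ∧
      Tendsto (fun n => Real.sqrt (xn n - 2 * R (sn n) s (xn n) x + x)) atTop (𝓝 0) := by
  have hcop : ∀ s t, IsTailCopulaLike (R s t) := fun s t =>
    isTailCopulaLike_of_tendsto (hunif s) (hunif t) (hR s t)
  have hE : Tendsto (fun p : ℕ × ℕ => xn p.1 - 2 * R (sn p.1) (sn p.2) (xn p.1) (xn p.2) + xn p.2)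
      (atTop ×ˢ atTop) (𝓝 0) := by
    have hsq := hcauchy.pow 2
    rw [zero_pow two_ne_zero] at hsq
    exact hsq.congr fun p =>
      Real.sq_sqrt (((hcop _ _).abs_sub_le (hxn _) (hxn _)).trans' (abs_nonneg _))
  obtain ⟨x, hx⟩ := cauchySeq_tendsto_of_complete
    (cauchySeq_of_tendsto_sub_two_mul_add hcop hxn hE)
  have hx0 : 0 ≤ x := ge_of_tendsto' hx hxn
  obtain ⟨t, ht⟩ : ∃ t, Tendsto (fun n => R (sn n) t (xn n) x) atTop (𝓝 x) := by
    rcases hx0.eq_or_lt with rfl | hpos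
    · refine ⟨Classical.arbitrary T, tendsto_const_nhds.congr fun n => ?_⟩
      exact le_antisymm ((hcop _ _).nonneg (hxn n) le_rfl) ((hcop _ _).le_right (hxn n) le_rfl)
    · obtain ⟨t, ht⟩ := hcomplete sn
        (tendsto_sInf_tail (tendsto_one_one_of_tendsto_sub_two_mul_add hcop hxn hx hpos hE))
      exact ⟨t, tendsto_of_tendsto_one_one_right hcop hxn hx hpos ht⟩
  refine ⟨t, x, hx0, ?_⟩
  have hρ := ((hx.sub (ht.const_mul 2)).add_const x).sqrt
  rwa [show x - 2 * x + x = 0 by ring, Real.sqrt_zero] at hρ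
end

section
/- Let d ≥ 2, let Z : Ω → ℝ^d be a random vector whose law is the d-fold product of the standard normal distribution on ℝ, let A be an invertible real d×d matrix, set X = A·Z and Γ = A·Aᵀ with entries γ_{jk}. Then E[ min_{j=1,…,d} exp(X_j − γ_{jj}/2) ] = Σ_{j=1}^d P[ ∀k ≠ j : X_j + γ_{jj}/2 ≤ X_k + γ_{kj} − γ_{kk}/2 ]. -/
/-!
Write `Y j = X j - γ j j / 2 = ⟪a j, Z⟫ - ‖a j‖² / 2`, where `a j` is the `j`-th row of `A`.
Splitting the expectation according to which `Y j` is smallest gives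
`E[min_j exp (Y j)] = ∑ j, E[exp (Y j); Y j ≤ Y k for all k]`; ties are negligible because the
rows of the invertible matrix `A` are distinct, so each `{Y j = Y k}` is an affine hyperplane.
By the Cameron–Martin formula `exp (Y j)` is the density of the law of `Z + a j` with respect to
the law of `Z`, so the `j`-th term is `P[Y j (Z + a j) ≤ Y k (Z + a j) for all k]`, and
`Y k (Z + a j) = X k + γ k j - γ k k / 2`.
-/

open MeasureTheory Filter Set Topology ProbabilityTheory Matrix
open scoped ENNReal

section ArgminCell

variable {ι α : Type*} [LinearOrder ι]

def argminCell (f : ι → α → ℝ) (j : ι) : Set α :=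
  {x | (∀ k, f j x ≤ f k x) ∧ ∀ k < j, f j x < f k x}

variable {f : ι → α → ℝ}

lemma exists_mem_argminCell [Finite ι] [Nonempty ι] (x : α) : ∃ j, x ∈ argminCell f j := by
  obtain ⟨j, hj⟩ := Finite.exists_min fun k => toLex (f k x, k)
  refine ⟨j, fun k => ?_, fun k hkj => ?_⟩
  · rcases Prod.Lex.le_iff.1 (hj k) with h | ⟨h, -⟩
    exacts [h.le, h.le]
  · exact (Prod.Lex.le_iff.1 (hj k)).resolve_right fun h => hkj.not_ge h.2

lemma eq_of_mem_argminCell {x : α} {j j' : ι} (hj : x ∈ argminCell f j)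
    (hj' : x ∈ argminCell f j') : j = j' := by
  by_contra hne
  rcases lt_or_gt_of_ne hne with h | h
  · exact (hj.1 j').not_gt (hj'.2 j h)
  · exact (hj'.1 j).not_gt (hj.2 j' h)

lemma iInf_eq_of_mem_argminCell [Finite ι] {x : α} {j : ι} (hx : x ∈ argminCell f j) :
    ⨅ k, f k x = f j x :=
  have : Nonempty ι := ⟨j⟩
  le_antisymm (ciInf_le (Set.finite_range _).bddBelow j) (le_ciInf hx.1)

lemma setOf_forall_le_diff_argminCell_subset (j : ι) :
    {x | ∀ k, f j x ≤ f k x} \ argminCell f j ⊆ ⋃ (k) (_ : k ≠ j), {x | f j x = f k x} := by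
  rintro x ⟨hle, hx⟩
  obtain ⟨k, hkj, hk⟩ : ∃ k < j, f k x ≤ f j x := by
    by_contra! h
    exact hx ⟨hle, h⟩
  exact Set.mem_biUnion hkj.ne (le_antisymm (hle k) hk)

lemma measurableSet_argminCell [Countable ι] [MeasurableSpace α] (hf : ∀ j, Measurable (f j))
    (j : ι) : MeasurableSet (argminCell f j) := by
  simp only [argminCell, Set.ofPred_and, Set.ofPred_forall]
  exact .inter (.iInter fun k => measurableSet_le (hf j) (hf k))
    (.iInter fun k => .iInter fun _ => measurableSet_lt (hf j) (hf k))

lemma lintegral_ofReal_iInf_eq_sum [Fintype ι] [MeasurableSpace α] {μ : Measure α}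
    (hf : ∀ j, Measurable (f j)) (hties : ∀ j k, j ≠ k → μ {x | f j x = f k x} = 0) :
    ∫⁻ x, ENNReal.ofReal (⨅ j, f j x) ∂μ
      = ∑ j, ∫⁻ x in {x | ∀ k, f j x ≤ f k x}, ENNReal.ofReal (f j x) ∂μ := by
  have hcell (j : ι) : argminCell f j =ᵐ[μ] {x | ∀ k, f j x ≤ f k x} :=
    ae_eq_set.2 ⟨by rw [sdiff_eq_empty.2 fun _ hx => hx.1, measure_empty],
      measure_mono_null (setOf_forall_le_diff_argminCell_subset j)
        (measure_iUnion_null fun k => measure_iUnion_null fun hk => hties j k hk.symm)⟩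
  have hsum (x : α) : ENNReal.ofReal (⨅ j, f j x)
      = ∑ j, (argminCell f j).indicator (fun x => ENNReal.ofReal (f j x)) x := by
    rcases isEmpty_or_nonempty ι with hι | hι
    · simp [Real.iInf_of_isEmpty]
    obtain ⟨j, hj⟩ := exists_mem_argminCell (f := f) x
    rw [Finset.sum_eq_single_of_mem j (Finset.mem_univ j) fun k _ hkj =>
        indicator_of_notMem (fun hk => hkj (eq_of_mem_argminCell hk hj)) _,
      indicator_of_mem hj, iInf_eq_of_mem_argminCell hj]
  simp_rw [hsum]
  rw [lintegral_finsetSum _ fun j _ =>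
    (hf j).ennreal_ofReal.indicator (measurableSet_argminCell hf j)]
  refine Finset.sum_congr rfl fun j _ => ?_
  rw [lintegral_indicator (measurableSet_argminCell hf j), setLIntegral_congr (hcell j)]

end ArgminCell

lemma gaussianReal_withDensity_exp (a : ℝ) :
    (gaussianReal 0 1).withDensity (fun x => ENNReal.ofReal (Real.exp (a * x - a ^ 2 / 2)))
      = gaussianReal a 1 := by
  rw [gaussianReal_of_var_ne_zero 0 one_ne_zero, gaussianReal_of_var_ne_zero a one_ne_zero,
    ← withDensity_mul _ (measurable_gaussianPDF _ _) (by fun_prop)]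
  congr 1
  ext x
  rw [Pi.mul_apply, gaussianPDF, gaussianPDF,
    ← ENNReal.ofReal_mul (gaussianPDFReal_nonneg _ _ _)]
  simp only [gaussianPDFReal, NNReal.coe_one, mul_one, mul_assoc, ← Real.exp_add]
  ring_nf

section Pi

variable {ι : Type*} [Fintype ι] {α : ι → Type*} [∀ i, MeasurableSpace (α i)]
  (μ : ∀ i, Measure (α i)) [∀ i, IsProbabilityMeasure (μ i)] {f : ∀ i, α i → ℝ≥0∞}

lemma lintegral_pi_prod_eq_prod_lintegral (hf : ∀ i, Measurable (f i)) :
    ∫⁻ x, ∏ i, f i (x i) ∂Measure.pi μ = ∏ i, ∫⁻ y, f i y ∂μ i := by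
  rw [lintegral_prod_eq_prod_lintegral_of_indepFun _ _
    (iIndepFun_pi fun i => (hf i).aemeasurable) fun i => (hf i).comp (measurable_pi_apply i)]
  exact Finset.prod_congr rfl fun i _ => (measurePreserving_eval μ i).lintegral_comp (hf i)

lemma pi_withDensity (hf : ∀ i, Measurable (f i))
    [∀ i, SigmaFinite ((μ i).withDensity (f i))] :
    Measure.pi (fun i => (μ i).withDensity (f i))
      = (Measure.pi μ).withDensity (fun x => ∏ i, f i (x i)) := by
  refine Measure.pi_eq (μ := fun i => (μ i).withDensity (f i)) fun s hs => ?_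
  have hind : (univ.pi s).indicator (fun x => ∏ i, f i (x i))
      = fun x => ∏ i, (s i).indicator (f i) (x i) := by
    ext x
    classical simp [Set.indicator, Finset.prod_ite_zero]
  rw [withDensity_apply _ (.univ_pi hs), ← lintegral_indicator (.univ_pi hs), hind,
    lintegral_pi_prod_eq_prod_lintegral μ fun i => (hf i).indicator (hs i)]
  exact Finset.prod_congr rfl fun i _ => by
    rw [lintegral_indicator (hs i), withDensity_apply _ (hs i)]

end Pi

lemma pi_gaussianReal_withDensity_exp_dotProduct {ι : Type*} [Fintype ι] (a : ι → ℝ) :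
    (Measure.pi fun _ : ι => gaussianReal 0 1).withDensity
        (fun z => ENNReal.ofReal (Real.exp (a ⬝ᵥ z - a ⬝ᵥ a / 2)))
      = (Measure.pi fun _ : ι => gaussianReal 0 1).map (· + a) := by
  have hdens (z : ι → ℝ) : ENNReal.ofReal (Real.exp (a ⬝ᵥ z - a ⬝ᵥ a / 2))
      = ∏ i, ENNReal.ofReal (Real.exp (a i * z i - a i ^ 2 / 2)) := by
    rw [← ENNReal.ofReal_prod_of_nonneg fun i _ => (Real.exp_pos _).le, ← Real.exp_sum,
      Finset.sum_sub_distrib, ← Finset.sum_div]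
    simp [dotProduct, sq]
  have hg (i : ι) : (gaussianReal 0 1).withDensity
      (fun x => ENNReal.ofReal (Real.exp (a i * x - a i ^ 2 / 2))) = gaussianReal (a i) 1 :=
    gaussianReal_withDensity_exp (a i)
  have (i : ι) : SigmaFinite ((gaussianReal 0 1).withDensity
      (fun x => ENNReal.ofReal (Real.exp (a i * x - a i ^ 2 / 2)))) := by
    rw [hg]; infer_instance
  simp_rw [hdens]
  rw [← pi_withDensity (fun _ => gaussianReal 0 1)
    (f := fun i x => ENNReal.ofReal (Real.exp (a i * x - a i ^ 2 / 2))) fun i => by fun_prop]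
  simp_rw [hg]
  have h := Measure.pi_map_pi (μ := fun _ : ι => gaussianReal 0 1)
    (f := fun i x => x + a i) fun i => (measurable_add_const _).aemeasurable
  simp_rw [gaussianReal_map_add_const, zero_add] at h
  exact h.symm

lemma setLIntegral_pi_gaussianReal_exp_dotProduct {ι : Type*} [Fintype ι] (a : ι → ℝ)
    {s : Set (ι → ℝ)} (hs : MeasurableSet s) :
    ∫⁻ z in s, ENNReal.ofReal (Real.exp (a ⬝ᵥ z - a ⬝ᵥ a / 2))
        ∂(Measure.pi fun _ : ι => gaussianReal 0 1)
      = (Measure.pi fun _ : ι => gaussianReal 0 1) ((· + a) ⁻¹' s) := by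
  rw [← withDensity_apply _ hs, pi_gaussianReal_withDensity_exp_dotProduct,
    Measure.map_apply (measurable_add_const a) hs]

lemma dotProduct_update_sub {ι : Type*} [Fintype ι] [DecidableEq ι] (b x : ι → ℝ) (i : ι)
    (t t' : ℝ) :
    b ⬝ᵥ Function.update x i t - b ⬝ᵥ Function.update x i t' = b i * (t - t') := by
  rw [← dotProduct_sub, ← Function.update_sub, sub_self, ← Pi.single, dotProduct_single]

lemma measure_pi_setOf_dotProduct_eq {ι : Type*} [Fintype ι] {μ : ι → Measure ℝ}
    [∀ i, SigmaFinite (μ i)] {b : ι → ℝ} {i : ι} (hi : b i ≠ 0) [NullSingletonClass (μ i)]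
    (c : ℝ) : Measure.pi μ {x | b ⬝ᵥ x = c} = 0 := by
  classical
  have hS : MeasurableSet {x : ι → ℝ | b ⬝ᵥ x = c} :=
    measurableSet_eq_fun (by fun_prop) measurable_const
  -- Integrate out the `i`-th coordinate first: each line in that direction meets the
  -- hyperplane in at most one point.
  rw [← lintegral_indicator_one hS, ← lintegral_zero]
  refine lintegral_eq_of_lmarginal_eq {i} (measurable_one.indicator hS) measurable_const ?_
  ext x
  have hsec : (Function.update x i ⁻¹' {x | b ⬝ᵥ x = c}).Subsingleton := fun t ht t' ht' => by
    have := dotProduct_update_sub b x i t t'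
    rw [ht, ht', sub_self, zero_eq_mul, sub_eq_zero] at this
    exact this.resolve_left hi
  rw [lmarginal_singleton, lmarginal_singleton]
  simp only [lintegral_const, zero_mul]
  rw [← hsec.measure_zero (μ i), ← lintegral_indicator_one (hS.preimage (measurable_update x))]
  rfl

section Matrix

variable {ι : Type*} [Fintype ι] (A : Matrix ι ι ℝ)

lemma mulVec_add_row_apply (z : ι → ℝ) (j k : ι) :
    (A *ᵥ (z + A j)) k = (A *ᵥ z) k + (A * Aᵀ) k j := by
  rw [mulVec_add, Pi.add_apply, mul_apply']
  rfl

lemma preimage_add_row_setOf_forall_le (j : ι) :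
    (· + A j) ⁻¹' {z | ∀ k, (A *ᵥ z) j - (A * Aᵀ) j j / 2 ≤ (A *ᵥ z) k - (A * Aᵀ) k k / 2}
      = {z | ∀ k, k ≠ j →
          (A *ᵥ z) j + (A * Aᵀ) j j / 2 ≤ (A *ᵥ z) k + (A * Aᵀ) k j - (A * Aᵀ) k k / 2} := by
  ext z
  simp only [mem_preimage, mem_ofPred_eq, mulVec_add_row_apply]
  refine forall_congr' fun k => ⟨fun h _ => by linarith, fun h => ?_⟩
  rcases eq_or_ne k j with rfl | hkj
  · exact le_rfl
  · linarith [h hkj]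

lemma measure_setOf_exp_mulVec_eq [DecidableEq ι] (hA : IsUnit A.det) {j k : ι} (hjk : j ≠ k) :
    (Measure.pi fun _ : ι => gaussianReal 0 1)
      {z | Real.exp ((A *ᵥ z) j - (A * Aᵀ) j j / 2) = Real.exp ((A *ᵥ z) k - (A * Aᵀ) k k / 2)}
      = 0 := by
  obtain ⟨i, hi⟩ : ∃ i, (A j - A k) i ≠ 0 := Function.ne_iff.1 fun h =>
    (isUnit_iff_ne_zero.1 hA) (det_zero_of_row_eq hjk (sub_eq_zero.1 h))
  have : NullSingletonClass (gaussianReal 0 1) := nullSingletonClass_gaussianReal one_ne_zero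
  have hset : {z | Real.exp ((A *ᵥ z) j - (A * Aᵀ) j j / 2)
        = Real.exp ((A *ᵥ z) k - (A * Aᵀ) k k / 2)}
      = {z | (A j - A k) ⬝ᵥ z = ((A * Aᵀ) j j - (A * Aᵀ) k k) / 2} := by
    ext z
    rw [mem_ofPred_eq, mem_ofPred_eq, Real.exp_eq_exp, sub_dotProduct]
    change _ = _ ↔ (A *ᵥ z) j - (A *ᵥ z) k = _
    constructor <;> intro h <;> linarith
  rw [hset]
  exact measure_pi_setOf_dotProduct_eq hi _

lemma lintegral_iInf_exp_mulVec [DecidableEq ι] [LinearOrder ι] (hA : IsUnit A.det) :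
    ∫⁻ z, ENNReal.ofReal (⨅ j, Real.exp ((A *ᵥ z) j - (A * Aᵀ) j j / 2))
        ∂(Measure.pi fun _ : ι => gaussianReal 0 1)
      = ∑ j, (Measure.pi fun _ : ι => gaussianReal 0 1) {z | ∀ k, k ≠ j →
          (A *ᵥ z) j + (A * Aᵀ) j j / 2 ≤ (A *ᵥ z) k + (A * Aᵀ) k j - (A * Aᵀ) k k / 2} := by
  rw [lintegral_ofReal_iInf_eq_sum (by fun_prop) fun j k => measure_setOf_exp_mulVec_eq A hA]
  refine Finset.sum_congr rfl fun j _ => ?_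
  simp_rw [Real.exp_le_exp]
  rw [← preimage_add_row_setOf_forall_le]
  refine setLIntegral_pi_gaussianReal_exp_dotProduct (A j) ?_
  simp only [Set.ofPred_forall]
  exact .iInter fun k => measurableSet_le (by fun_prop) (by fun_prop)

end Matrix

theorem empirical_tail_copulas_stmt10_general
    {Ω : Type*} [MeasurableSpace Ω] (P : Measure Ω)
    (d : ℕ)
    (Z : Ω → Fin d → ℝ) (hZmeas : Measurable Z)
    (hZ : Measure.map Z P = Measure.pi fun _ : Fin d => gaussianReal 0 1)
    (A : Matrix (Fin d) (Fin d) ℝ) (hA : IsUnit A.det) :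
    (∫ ω, ⨅ j, Real.exp (A.mulVec (Z ω) j - (A * Aᵀ) j j / 2) ∂P)
      = ∑ j, (P {ω | ∀ k, k ≠ j →
          A.mulVec (Z ω) j + (A * Aᵀ) j j / 2
            ≤ A.mulVec (Z ω) k + (A * Aᵀ) k j - (A * Aᵀ) k k / 2}).toReal := by
  have hmin : Measurable fun z : Fin d → ℝ => ⨅ j, Real.exp ((A *ᵥ z) j - (A * Aᵀ) j j / 2) :=
    .iInf fun j => by fun_prop
  have hT (j : Fin d) : MeasurableSet {z : Fin d → ℝ | ∀ k, k ≠ j →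
      (A *ᵥ z) j + (A * Aᵀ) j j / 2 ≤ (A *ᵥ z) k + (A * Aᵀ) k j - (A * Aᵀ) k k / 2} := by
    simp only [Set.ofPred_forall]
    exact .iInter fun k => .iInter fun _ => measurableSet_le (by fun_prop) (by fun_prop)
  rw [← integral_map hZmeas.aemeasurable hmin.aestronglyMeasurable, hZ,
    integral_eq_lintegral_of_nonneg_ae
      (ae_of_all _ fun z => Real.iInf_nonneg fun j => (Real.exp_pos _).le)
      hmin.aestronglyMeasurable, lintegral_iInf_exp_mulVec A hA,
    ENNReal.toReal_sum fun j _ => measure_ne_top _ _]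
  simp_rw [← hZ, Measure.map_apply hZmeas (hT _)]
  rfl

/-- Lemma (expectation of the minimum of correlated log-normal variables with unit
mean as a sum of Gaussian orthant probabilities). -/
theorem empirical_tail_copulas_stmt10
    {Ω : Type*} [MeasurableSpace Ω] (P : Measure Ω) [IsProbabilityMeasure P]
    (d : ℕ) (hd : 2 ≤ d)
    (Z : Ω → Fin d → ℝ) (hZmeas : Measurable Z)
    (hZ : Measure.map Z P = Measure.pi fun _ : Fin d => gaussianReal 0 1)
    (A : Matrix (Fin d) (Fin d) ℝ) (hA : IsUnit A.det) :
    (∫ ω, ⨅ j, Real.exp (A.mulVec (Z ω) j - (A * Aᵀ) j j / 2) ∂P)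
      = ∑ j, (P {ω | ∀ k, k ≠ j →
          A.mulVec (Z ω) j + (A * Aᵀ) j j / 2
            ≤ A.mulVec (Z ω) k + (A * Aᵀ) k j - (A * Aᵀ) k k / 2}).toReal :=
  empirical_tail_copulas_stmt10_general P d Z hZmeas hZ A hA
end

section
/- Let (T, ρ) be a compact metric space, (Ω, 𝓕, P) a probability space, and U : T → Ω → ℝ a stochastic process such that for every ω ∈ Ω the sample path t ↦ U(t)(ω) is continuous and for every t ∈ T the random variable U(t) is uniformly distributed on the interval (0,1). Assume that for all s, t ∈ T and all x, y ∈ [0,∞) the bivariate tail-copula limit R_{(s,t)}(x,y) = lim_{u↓0} u⁻¹ P[U(s) ≤ u·x, U(t) ≤ u·y] exists. Assume moreover there exist positive scalars c₁, c₂, u₀, ε₀ and, for every ε ∈ (0, ε₀], a scalar δ(ε) > 0, such that for all (u, ε, s) ∈ (0,u₀] × (0,ε₀] × T: P[ sup_{t : ρ(s,t) ≤ δ(ε)} U(t) > u·exp(c₁ε²) | inf_{t : ρ(s,t) ≤ δ(ε)} U(t) ≤ u ] ≤ c₂·ε². Then for every η > 0 there exists δ > 0 such that for all (s, t) ∈ T²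 with ρ(s,t) < δ one has 1 − R_{(s,t)}(1,1) < η. -/
/-!
Fix `ε` and let `v = u · exp (c₁ ε²)`. If the infimum of `U` over the `δ(ε)`-ball around `s`
is at most `u` (an event of probability at least `P[U(s) ≤ u] = u`) but the supremum is at most
`v`, then both `U(s)` and `U(t)` are at most `v`. The hypothesis bounds the conditional
probability of the complementary case by `c₂ ε²`, so `P[U(s) ≤ v, U(t) ≤ v] ≥ (1 - c₂ ε²) u`,
and letting `u ↓ 0` gives `R_{(s,t)}(1,1) ≥ (1 - c₂ ε²) exp (-c₁ ε²)`, which tends to `1`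
as `ε → 0`.
-/

open MeasureTheory Filter Set Topology

theorem Continuous.le_ciSup_subtype {T : Type*} [TopologicalSpace T] [CompactSpace T]
    {f : T → ℝ} (hf : Continuous f) {p : T → Prop} {t : T} (ht : p t) :
    f t ≤ ⨆ x : {x // p x}, f x.1 :=
  le_ciSup ((isCompact_range hf).bddAbove.mono (range_comp_subset_range Subtype.val f))
    (⟨t, ht⟩ : {x // p x})

theorem Continuous.ciInf_subtype_le {T : Type*} [TopologicalSpace T] [CompactSpace T]
    {f : T → ℝ} (hf : Continuous f) {p : T → Prop} {t : T} (ht : p t) :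
    ⨅ x : {x // p x}, f x.1 ≤ f t :=
  ciInf_le ((isCompact_range hf).bddBelow.mono (range_comp_subset_range Subtype.val f))
    (⟨t, ht⟩ : {x // p x})

theorem MeasureTheory.mul_le_measureReal_of_diff_subset {Ω : Type*} [MeasurableSpace Ω]
    {μ : Measure Ω} [IsFiniteMeasure μ] {A B C : Set Ω} {c u : ℝ}
    (hBCA : B \ C ⊆ A) (hu : 0 < u) (huB : u ≤ μ.real B) (hc : c ≤ 1)
    (hcond : μ.real (C ∩ B) / μ.real B ≤ c) :
    (1 - c) * u ≤ μ.real A := by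
  have hCB : μ.real (C ∩ B) ≤ c * μ.real B := (div_le_iff₀ (hu.trans_le huB)).mp hcond
  have hB : μ.real B ≤ μ.real A + μ.real (C ∩ B) :=
    calc μ.real B ≤ μ.real (A ∪ (C ∩ B)) := measureReal_mono fun ω hω => by
            by_cases hωC : ω ∈ C
            · exact Or.inr ⟨hωC, hω⟩
            · exact Or.inl (hBCA ⟨hω, hωC⟩)
      _ ≤ μ.real A + μ.real (C ∩ B) := measureReal_union_le _ _
  nlinarith

theorem le_of_tendsto_div_of_mul_le {f : ℝ → ℝ} {L b v₀ : ℝ}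
    (hf : Tendsto (fun v => f v / v) (𝓝[>] 0) (𝓝 L)) (hv₀ : 0 < v₀)
    (hb : ∀ v ∈ Ioc 0 v₀, b * v ≤ f v) : b ≤ L := by
  refine ge_of_tendsto hf ?_
  filter_upwards [Ioc_mem_nhdsGT hv₀] with v hv
  exact (le_div_iff₀ hv.1).mpr (hb v hv)

theorem exists_mem_Ioc_one_sub_lt_div_exp (c₁ c₂ : ℝ) {ε₀ η : ℝ} (hε₀ : 0 < ε₀)
    (hη : 0 < η) :
    ∃ ε ∈ Ioc 0 ε₀, c₂ * ε ^ 2 ≤ 1 ∧ 1 - η < (1 - c₂ * ε ^ 2) / Real.exp (c₁ * ε ^ 2) := by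
  have hcont : Continuous fun ε : ℝ => c₂ * ε ^ 2 := by fun_prop
  have hratio : Continuous fun ε : ℝ => (1 - c₂ * ε ^ 2) / Real.exp (c₁ * ε ^ 2) :=
    Continuous.div (by fun_prop) (by fun_prop) fun _ => (Real.exp_pos _).ne'
  have hsmall : ∀ᶠ ε in 𝓝 0, c₂ * ε ^ 2 < 1 :=
    hcont.continuousAt.eventually_lt continuousAt_const (by simp)
  have hclose : ∀ᶠ ε in 𝓝 0, 1 - η < (1 - c₂ * ε ^ 2) / Real.exp (c₁ * ε ^ 2) :=
    continuousAt_const.eventually_lt hratio.continuousAt (by simpa using hη)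
  obtain ⟨ε, hε, hsmall, hclose⟩ :=
    ((eventually_mem_set.mpr (Ioc_mem_nhdsGT hε₀)).and
      (nhdsWithin_le_nhds (hsmall.and hclose))).exists
  exact ⟨ε, hε, hsmall.le, hclose⟩

section SamplePaths

variable {Ω T : Type*} [MeasurableSpace Ω] {P : Measure Ω} [IsFiniteMeasure P]
  [MetricSpace T] [CompactSpace T] {U : T → Ω → ℝ}

theorem mul_le_measureReal_joint_of_cond_le (hcont : ∀ ω, Continuous fun t => U t ω)
    {s t : T} {r a c u : ℝ} (hst : dist s t ≤ r) (hu : 0 < u)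
    (hPs : u ≤ P.real {ω | U s ω ≤ u}) (hc : c ≤ 1)
    (hcond : P.real ({ω | u * a < ⨆ t : {t : T // dist s t ≤ r}, U t.1 ω}
          ∩ {ω | (⨅ t : {t : T // dist s t ≤ r}, U t.1 ω) ≤ u})
        / P.real {ω | (⨅ t : {t : T // dist s t ≤ r}, U t.1 ω) ≤ u} ≤ c) :
    (1 - c) * u ≤ P.real {ω | U s ω ≤ u * a ∧ U t ω ≤ u * a} := by
  have hss : dist s s ≤ r := (dist_self s).trans_le (dist_nonneg.trans hst)
  refine mul_le_measureReal_of_diff_subset ?_ hu (hPs.trans (measureReal_mono ?_)) hc hcond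
  · rintro ω ⟨-, hsup⟩
    have hsup : (⨆ t : {t : T // dist s t ≤ r}, U t.1 ω) ≤ u * a := not_lt.mp hsup
    exact ⟨((hcont ω).le_ciSup_subtype hss).trans hsup,
      ((hcont ω).le_ciSup_subtype hst).trans hsup⟩
  · exact fun ω hω => ((hcont ω).ciInf_subtype_le hss).trans hω

theorem one_sub_div_le_tailCopula_of_cond_le (hcont : ∀ ω, Continuous fun t => U t ω)
    {s t : T} {L r a c u₀ : ℝ}
    (hR : Tendsto (fun v => P.real {ω | U s ω ≤ v * 1 ∧ U t ω ≤ v * 1} / v) (𝓝[>] 0) (𝓝 L))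
    (hst : dist s t ≤ r) (ha : 0 < a) (hc : c ≤ 1) (hu₀ : 0 < u₀)
    (hPs : ∀ u ∈ Ioc 0 u₀, u ≤ P.real {ω | U s ω ≤ u})
    (hcond : ∀ u ∈ Ioc 0 u₀,
      P.real ({ω | u * a < ⨆ t : {t : T // dist s t ≤ r}, U t.1 ω}
          ∩ {ω | (⨅ t : {t : T // dist s t ≤ r}, U t.1 ω) ≤ u})
        / P.real {ω | (⨅ t : {t : T // dist s t ≤ r}, U t.1 ω) ≤ u} ≤ c) :
    (1 - c) / a ≤ L := by
  refine le_of_tendsto_div_of_mul_le hR (mul_pos hu₀ ha) fun v ⟨hv, hvu₀⟩ => ?_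
  have hu : v / a ∈ Ioc 0 u₀ := ⟨div_pos hv ha, (div_le_iff₀ ha).mpr hvu₀⟩
  have key := mul_le_measureReal_joint_of_cond_le hcont hst hu.1 (hPs _ hu) hc (hcond _ hu)
  rw [div_mul_cancel₀ v ha.ne'] at key
  simpa only [mul_one, div_mul_eq_mul_div, mul_div_assoc] using key

end SamplePaths

theorem empirical_tail_copulas_stmt11_general
    {Ω : Type*} [MeasurableSpace Ω] (P : Measure Ω) [IsProbabilityMeasure P]
    {T : Type*} [MetricSpace T] [CompactSpace T]
    (U : T → Ω → ℝ)
    (hcont : ∀ ω : Ω, Continuous fun t => U t ω)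
    (hunif : ∀ t : T, ∀ x ∈ Icc (0:ℝ) 1, P {ω | U t ω ≤ x} = ENNReal.ofReal x)
    (R : T → T → ℝ → ℝ → ℝ)
    (hR : ∀ (s t : T) (x y : ℝ), 0 ≤ x → 0 ≤ y →
      Tendsto (fun u : ℝ => (P {ω | U s ω ≤ u * x ∧ U t ω ≤ u * y}).toReal / u)
        (𝓝[>] (0:ℝ)) (𝓝 (R s t x y)))
    (c₁ c₂ u₀ ε₀ : ℝ) (hu₀ : 0 < u₀) (hε₀ : 0 < ε₀)
    (δf : ℝ → ℝ) (hδf : ∀ ε ∈ Ioc (0:ℝ) ε₀, 0 < δf ε)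
    (hcond : ∀ u ∈ Ioc (0:ℝ) u₀, ∀ ε ∈ Ioc (0:ℝ) ε₀, ∀ s : T,
      (P ({ω | u * Real.exp (c₁ * ε ^ 2) < ⨆ t : {t : T // dist s t ≤ δf ε}, U t.1 ω}
          ∩ {ω | (⨅ t : {t : T // dist s t ≤ δf ε}, U t.1 ω) ≤ u})).toReal
        / (P {ω | (⨅ t : {t : T // dist s t ≤ δf ε}, U t.1 ω) ≤ u}).toReal
      ≤ c₂ * ε ^ 2) :
    ∀ η > (0:ℝ), ∃ δ > (0:ℝ), ∀ s t : T, dist s t < δ → 1 - R s t 1 1 < η := by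
  intro η hη
  obtain ⟨ε, hε, hsmall, hclose⟩ := exists_mem_Ioc_one_sub_lt_div_exp c₁ c₂ hε₀ hη
  refine ⟨δf ε, hδf ε hε, fun s t hst => ?_⟩
  have hPs : ∀ u ∈ Ioc 0 (min u₀ 1), u ≤ P.real {ω | U s ω ≤ u} := fun u ⟨hu, hu₁⟩ => by
    rw [measureReal_def, hunif s u ⟨hu.le, hu₁.trans (min_le_right _ _)⟩,
      ENNReal.toReal_ofReal hu.le]
  have hRst := one_sub_div_le_tailCopula_of_cond_le hcont (hR s t 1 1 zero_le_one zero_le_one)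
    hst.le (Real.exp_pos _) hsmall (lt_min hu₀ one_pos) hPs
    fun u ⟨hu, hu₁⟩ => hcond u ⟨hu, hu₁.trans (min_le_left _ _)⟩ ε hε s
  linarith

/-- Corollary (under the covering-by-balls condition, nearby points have tail
dependence coefficient close to one). -/
theorem empirical_tail_copulas_stmt11
    {Ω : Type*} [MeasurableSpace Ω] (P : Measure Ω) [IsProbabilityMeasure P]
    {T : Type*} [MetricSpace T] [CompactSpace T] [Nonempty T]
    (U : T → Ω → ℝ)
    (hcont : ∀ ω : Ω, Continuous fun t => U t ω)
    (hunif : ∀ t : T, ∀ x ∈ Icc (0:ℝ) 1, P {ω | U t ω ≤ x} = ENNReal.ofReal x)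
    (R : T → T → ℝ → ℝ → ℝ)
    (hR : ∀ (s t : T) (x y : ℝ), 0 ≤ x → 0 ≤ y →
      Tendsto (fun u : ℝ => (P {ω | U s ω ≤ u * x ∧ U t ω ≤ u * y}).toReal / u)
        (𝓝[>] (0:ℝ)) (𝓝 (R s t x y)))
    (c₁ c₂ u₀ ε₀ : ℝ) (hc₁ : 0 < c₁) (hc₂ : 0 < c₂) (hu₀ : 0 < u₀) (hε₀ : 0 < ε₀)
    (δf : ℝ → ℝ) (hδf : ∀ ε ∈ Ioc (0:ℝ) ε₀, 0 < δf ε)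
    (hcond : ∀ u ∈ Ioc (0:ℝ) u₀, ∀ ε ∈ Ioc (0:ℝ) ε₀, ∀ s : T,
      (P ({ω | u * Real.exp (c₁ * ε ^ 2) < ⨆ t : {t : T // dist s t ≤ δf ε}, U t.1 ω}
          ∩ {ω | (⨅ t : {t : T // dist s t ≤ δf ε}, U t.1 ω) ≤ u})).toReal
        / (P {ω | (⨅ t : {t : T // dist s t ≤ δf ε}, U t.1 ω) ≤ u}).toReal
      ≤ c₂ * ε ^ 2) :
    ∀ η > (0:ℝ), ∃ δ > (0:ℝ), ∀ s t : T, dist s t < δ → 1 - R s t 1 1 < η :=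
  empirical_tail_copulas_stmt11_general P U hcont hunif R hR c₁ c₂ u₀ ε₀ hu₀ hε₀ δf hδf hcond
end

section
/- Let Z be a standard normal random variable, let u, v ∈ ℝ with u ≠ v, set a = |u − v|, and let x, y > 0. Then E[ min( x·exp(u·Z − u²/2), y·exp(v·Z − v²/2) ) ] = x·(1 − Φ(a/2 + a⁻¹·log(x/y))) + y·(1 − Φ(a/2 + a⁻¹·log(y/x))), where Φ denotes the cumulative distribution function of the standard normal distribution on ℝ. -/
/-!
Tilting `N(0,1)` by `z ↦ exp (w z - w² / 2)` gives `N(w,1)`, so `E[x B(u); Z ∈ A] = x P(N(u,1) ∈ A)`.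
For `v < u` the two terms of the minimum cross at the single point
`c = (u + v) / 2 + (u - v)⁻¹ log (y / x)`, below which `x B(u)` is the smaller one. Hence the
expectation is `x P(N(u,1) ≤ c) + y P(N(v,1) > c)`, and centring and reflecting turns these into
the standard normal tails at `u - c` and `c - v`.
-/

open MeasureTheory Set ProbabilityTheory

open scoped NNReal

section MinSplit

variable {α : Type*} [LinearOrder α] [TopologicalSpace α] [OrderClosedTopology α]
  [MeasurableSpace α] [OpensMeasurableSpace α] {m : Measure α} {f g : α → ℝ} {c : α}

lemma integral_min_eq_setIntegral_Iic_add_setIntegral_Ioi (hfg : ∀ z, f z ≤ g z ↔ z ≤ c)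
    (hf : IntegrableOn f (Iic c) m) (hg : IntegrableOn g (Ioi c) m) :
    ∫ z, min (f z) (g z) ∂m = ∫ z in Iic c, f z ∂m + ∫ z in Ioi c, g z ∂m := by
  have hmin_f : EqOn (fun z => min (f z) (g z)) f (Iic c) :=
    fun z hz => min_eq_left ((hfg z).2 hz)
  have hmin_g : EqOn (fun z => min (f z) (g z)) g (Ioi c) :=
    fun z hz => min_eq_right (le_of_lt (not_le.1 fun h => not_le.2 hz ((hfg z).1 h)))
  rw [← setIntegral_univ, ← Iic_union_Ioi,
    setIntegral_union (Iic_disjoint_Ioi le_rfl) measurableSet_Ioi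
      (hf.congr_fun hmin_f.symm measurableSet_Iic) (hg.congr_fun hmin_g.symm measurableSet_Ioi),
    setIntegral_congr_fun measurableSet_Iic hmin_f, setIntegral_congr_fun measurableSet_Ioi hmin_g]

end MinSplit

lemma mul_exp_le_mul_exp_iff {x y u v : ℝ} (hx : 0 < x) (hy : 0 < y) (huv : v < u) (z : ℝ) :
    x * Real.exp (u * z - u ^ 2 / 2) ≤ y * Real.exp (v * z - v ^ 2 / 2)
      ↔ z ≤ (u + v) / 2 + (u - v)⁻¹ * Real.log (y / x) := by
  have ha : 0 < u - v := sub_pos.2 huv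
  have hcross : (u - v) * ((u + v) / 2 + (u - v)⁻¹ * Real.log (y / x))
      = (u ^ 2 - v ^ 2) / 2 + Real.log y - Real.log x := by
    rw [Real.log_div hy.ne' hx.ne']
    field_simp
    ring
  rw [← mul_le_mul_iff_of_pos_left (b := z) ha, hcross,
    ← Real.log_le_log_iff (by positivity) (by positivity), Real.log_mul hx.ne' (by positivity),
    Real.log_mul hy.ne' (by positivity), Real.log_exp, Real.log_exp]
  constructor <;> intro h <;> linarith

namespace ProbabilityTheory

variable {μ : ℝ} {v : ℝ≥0}

lemma gaussianPDFReal_mul_exp_mul (hv : v ≠ 0) (t x : ℝ) :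
    gaussianPDFReal μ v x * Real.exp (t * x)
      = Real.exp (μ * t + v * t ^ 2 / 2) * gaussianPDFReal (μ + v * t) v x := by
  have hv' : (v : ℝ) ≠ 0 := NNReal.coe_ne_zero.mpr hv
  simp only [gaussianPDFReal]
  rw [mul_assoc, ← Real.exp_add, mul_left_comm, ← Real.exp_add]
  congr 2
  field_simp
  ring

lemma integral_exp_mul_gaussianReal (t : ℝ) :
    ∫ x, Real.exp (t * x) ∂gaussianReal μ v = Real.exp (μ * t + v * t ^ 2 / 2) :=
  congr_fun mgf_id_gaussianReal t

lemma gaussianReal_tilted_mul (hv : v ≠ 0) (t : ℝ) :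
    (gaussianReal μ v).tilted (t * ·) = gaussianReal (μ + v * t) v := by
  ext s hs
  rw [tilted_apply' _ _ hs, integral_exp_mul_gaussianReal, gaussianReal_apply _ hv,
    gaussianReal_of_var_ne_zero _ hv,
    setLIntegral_withDensity_eq_setLIntegral_mul _ (measurable_gaussianPDF μ v) (by fun_prop) hs]
  refine setLIntegral_congr_fun hs fun x _ => ?_
  simp only [Pi.mul_apply, gaussianPDF, ← ENNReal.ofReal_mul (gaussianPDFReal_nonneg _ _ _)]
  rw [← mul_div_assoc, gaussianPDFReal_mul_exp_mul hv, mul_div_cancel_left₀ _ (Real.exp_pos _).ne']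

lemma setIntegral_exp_mul_sub_gaussianReal (hv : v ≠ 0) (t : ℝ) (s : Set ℝ) :
    ∫ x in s, Real.exp (t * x - (μ * t + v * t ^ 2 / 2)) ∂gaussianReal μ v
      = (gaussianReal (μ + v * t) v).real s := by
  have h := setIntegral_tilted (μ := gaussianReal μ v) (t * ·) (fun _ => (1 : ℝ)) s
  rw [gaussianReal_tilted_mul hv, setIntegral_const, integral_exp_mul_gaussianReal] at h
  simpa [Real.exp_sub] using h.symm

lemma gaussianReal_real_Ioi (μ c : ℝ) (v : ℝ≥0) :
    (gaussianReal μ v).real (Ioi c) = (gaussianReal 0 v).real (Ioi (c - μ)) := by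
  rw [← zero_add μ, ← gaussianReal_map_add_const, map_measureReal_apply (measurable_add_const μ)
    measurableSet_Ioi, zero_add]
  congr 1
  ext z
  simp [sub_lt_iff_lt_add]

lemma gaussianReal_real_Iic (hv : v ≠ 0) (μ c : ℝ) :
    (gaussianReal μ v).real (Iic c) = (gaussianReal 0 v).real (Ioi (μ - c)) := by
  have := nullSingletonClass_gaussianReal (μ := 0) hv
  rw [← sub_zero μ, ← gaussianReal_map_const_sub, map_measureReal_apply (measurable_const_sub μ)
    measurableSet_Iic, sub_zero, measureReal_congr Ioi_ae_eq_Ici]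
  congr 1
  ext z
  simp

lemma integral_min_mul_exp_gaussianReal_of_lt {x y u v : ℝ} (hx : 0 < x) (hy : 0 < y)
    (huv : v < u) :
    ∫ z, min (x * Real.exp (u * z - u ^ 2 / 2)) (y * Real.exp (v * z - v ^ 2 / 2))
        ∂gaussianReal 0 1
      = x * (gaussianReal 0 1).real (Ioi ((u - v) / 2 + (u - v)⁻¹ * Real.log (x / y)))
        + y * (gaussianReal 0 1).real (Ioi ((u - v) / 2 + (u - v)⁻¹ * Real.log (y / x))) := by
  have htilt (w : ℝ) (s : Set ℝ) :
      ∫ z in s, Real.exp (w * z - w ^ 2 / 2) ∂gaussianReal 0 1 = (gaussianReal w 1).real s := by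
    have h := setIntegral_exp_mul_sub_gaussianReal (μ := 0) one_ne_zero w s
    simpa only [zero_mul, zero_add, NNReal.coe_one, one_mul] using h
  have hint (a w : ℝ) :
      Integrable (fun z => a * Real.exp (w * z - w ^ 2 / 2)) (gaussianReal 0 1) := by
    simp_rw [Real.exp_sub]
    exact ((integrable_exp_mul_gaussianReal w).div_const _).const_mul a
  set c := (u + v) / 2 + (u - v)⁻¹ * Real.log (y / x) with hc
  have hcu : u - c = (u - v) / 2 + (u - v)⁻¹ * Real.log (x / y) := by
    rw [hc, Real.log_div hx.ne' hy.ne', Real.log_div hy.ne' hx.ne']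
    ring
  have hcv : c - v = (u - v) / 2 + (u - v)⁻¹ * Real.log (y / x) := by
    rw [hc]
    ring
  rw [integral_min_eq_setIntegral_Iic_add_setIntegral_Ioi (mul_exp_le_mul_exp_iff hx hy huv)
      (hint x u).integrableOn (hint y v).integrableOn, integral_const_mul, integral_const_mul,
    htilt, htilt, gaussianReal_real_Iic one_ne_zero, gaussianReal_real_Ioi v, hcu, hcv]

lemma integral_min_mul_exp_gaussianReal {x y u v : ℝ} (hx : 0 < x) (hy : 0 < y) (huv : u ≠ v) :
    ∫ z, min (x * Real.exp (u * z - u ^ 2 / 2)) (y * Real.exp (v * z - v ^ 2 / 2))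
        ∂gaussianReal 0 1
      = x * (gaussianReal 0 1).real (Ioi (|u - v| / 2 + |u - v|⁻¹ * Real.log (x / y)))
        + y * (gaussianReal 0 1).real (Ioi (|u - v| / 2 + |u - v|⁻¹ * Real.log (y / x))) := by
  rcases huv.lt_or_gt with h | h
  · simp_rw [min_comm (x * _), abs_sub_comm u v, abs_of_pos (sub_pos.2 h)]
    rw [integral_min_mul_exp_gaussianReal_of_lt hy hx h, add_comm]
  · rw [abs_of_pos (sub_pos.2 h), integral_min_mul_exp_gaussianReal_of_lt hx hy h]

end ProbabilityTheory

theorem empirical_tail_copulas_stmt16_general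
    {Ω : Type*} [MeasurableSpace Ω] (P : Measure Ω)
    (Z : Ω → ℝ) (hZmeas : Measurable Z)
    (hZ : Measure.map Z P = gaussianReal 0 1)
    (u v : ℝ) (huv : u ≠ v) (x y : ℝ) (hx : 0 < x) (hy : 0 < y) :
    ∫ ω, min (x * Real.exp (u * Z ω - u ^ 2 / 2))
             (y * Real.exp (v * Z ω - v ^ 2 / 2)) ∂P
      = x * (1 - ((gaussianReal 0 1)
              (Iic (|u - v| / 2 + |u - v|⁻¹ * Real.log (x / y)))).toReal)
        + y * (1 - ((gaussianReal 0 1)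
              (Iic (|u - v| / 2 + |u - v|⁻¹ * Real.log (y / x)))).toReal) := by
  rw [← integral_map (f := fun z => min (x * Real.exp (u * z - u ^ 2 / 2))
      (y * Real.exp (v * z - v ^ 2 / 2))) hZmeas.aemeasurable (by fun_prop),
    hZ, integral_min_mul_exp_gaussianReal hx hy huv]
  simp only [← measureReal_def, ← probReal_compl_eq_one_sub measurableSet_Iic, compl_Iic]

/-- The bivariate Hüsler–Reiss tail copula of the one-dimensional Smith model. -/
theorem empirical_tail_copulas_stmt16
    {Ω : Type*} [MeasurableSpace Ω] (P : Measure Ω) [IsProbabilityMeasure P]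
    (Z : Ω → ℝ) (hZmeas : Measurable Z)
    (hZ : Measure.map Z P = gaussianReal 0 1)
    (u v : ℝ) (huv : u ≠ v) (x y : ℝ) (hx : 0 < x) (hy : 0 < y) :
    ∫ ω, min (x * Real.exp (u * Z ω - u ^ 2 / 2))
             (y * Real.exp (v * Z ω - v ^ 2 / 2)) ∂P
      = x * (1 - ((gaussianReal 0 1)
              (Iic (|u - v| / 2 + |u - v|⁻¹ * Real.log (x / y)))).toReal)
        + y * (1 - ((gaussianReal 0 1)
              (Iic (|u - v| / 2 + |u - v|⁻¹ * Real.log (y / x)))).toReal) :=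
  empirical_tail_copulas_stmt16_general P Z hZmeas hZ u v huv x y hx hy
end
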